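/- With p_n as above, the second moment ∑_{n=0}^∞ n^2·p_n equals 71/3, so the variance of the number of vertices in the relative interior of the typical I-segment equals 71/3 - 4 = 59/3. Equivalently, 3·∫_0^1 ∫_0^1 [a^2(2b^2 - 11b + 15) - a(4b^2 - 10b - 3) + b(1 + 2b)] db da = 71/3. -/

import Mathlib

open MeasureTheory

noncomputable def stitP (n : ℕ) : ℝ :=
  3 * ∫ a in (0:ℝ)..1, ∫ b in (0:ℝ)..1,
    (1 - a) ^ 3 * (3 - (1 - a) * (3 - b)) ^ n / (3 - (1 - a) * (2 - b)) ^ (n + 1)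

/-!
With `x = 3 - (1 - a)(3 - b)` and `y = 3 - (1 - a)(2 - b) = x + (1 - a)`, the integrand of `p_n`
is `(y - x)³ xⁿ / yⁿ⁺¹`. Summing `∑ n² rⁿ = r(1 + r)/(1 - r)³` at `r = x / y` gives
`∑ n² (y - x)³ xⁿ / yⁿ⁺¹ = x(x + y)`, which is the polynomial integrand of the statement. All terms
are nonnegative on the unit square, so the sum may be taken inside both integrals (monotone
convergence), and the polynomial integrates to `71/9`.
-/

open Set
open scoped Interval

theorem hasSum_sq_mul_geometric {𝕜 : Type*} [NormedField 𝕜] [CompleteSpace 𝕜] {r : 𝕜}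
    (hr : ‖r‖ < 1) :
    HasSum (fun n : ℕ => (n : 𝕜) ^ 2 * r ^ n) (r * (1 + r) / (1 - r) ^ 3) := by
  have h2 := hasSum_choose_mul_geometric_of_norm_lt_one 2 hr
  have h1 := hasSum_choose_mul_geometric_of_norm_lt_one 1 hr
  have h0 := hasSum_choose_mul_geometric_of_norm_lt_one 0 hr
  have hne : (1 : 𝕜) - r ≠ 0 := sub_ne_zero.2 fun h => by simp [← h] at hr
  have hterm : (fun n : ℕ => (n : 𝕜) ^ 2 * r ^ n) = fun n =>
      2 * ((n + 2).choose 2 * r ^ n) - 3 * ((n + 1).choose 1 * r ^ n) +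
        (n + 0).choose 0 * r ^ n := by
    funext n
    have hchoose : ((n + 2).choose 2 : 𝕜) * 2 = (n + 2) * (n + 1) := by
      have h : (n + 2).choose 2 * 2 = (n + 2) * (n + 1) :=
        (Nat.add_one_mul_choose_eq (n + 1) 1).symm.trans (by simp)
      simpa using congrArg (Nat.cast : ℕ → 𝕜) h
    simp only [Nat.choose_one_right, Nat.choose_zero_right]
    push_cast
    linear_combination (-r ^ n) * hchoose
  have hsum : r * (1 + r) / (1 - r) ^ 3 =
      2 * (1 / (1 - r) ^ (2 + 1)) - 3 * (1 / (1 - r) ^ (1 + 1)) + 1 / (1 - r) ^ (0 + 1) := by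
    field_simp
    ring
  rw [hterm, hsum]
  exact ((h2.mul_left 2).sub (h1.mul_left 3)).add h0

theorem hasSum_sq_mul_pow_div_pow {𝕜 : Type*} [NormedField 𝕜] [CompleteSpace 𝕜] {x y : 𝕜}
    (hxy : ‖x‖ < ‖y‖) :
    HasSum (fun n : ℕ => (n : 𝕜) ^ 2 * ((y - x) ^ 3 * x ^ n / y ^ (n + 1))) (x * (x + y)) := by
  have hy : y ≠ 0 := norm_pos_iff.1 ((norm_nonneg x).trans_lt hxy)
  have hyx : y - x ≠ 0 := sub_ne_zero.2 fun h => (h ▸ hxy).false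
  have hr : ‖x / y‖ < 1 := by rwa [norm_div, div_lt_one ((norm_nonneg x).trans_lt hxy)]
  have hterm : (fun n : ℕ => (n : 𝕜) ^ 2 * ((y - x) ^ 3 * x ^ n / y ^ (n + 1))) =
      fun n : ℕ => (y - x) ^ 3 / y * ((n : 𝕜) ^ 2 * (x / y) ^ n) := by
    funext n
    rw [div_pow]
    field_simp
    ring
  have hsum : x * (x + y) = (y - x) ^ 3 / y * (x / y * (1 + x / y) / (1 - x / y) ^ 3) := by
    field_simp
    ring
  rw [hterm, hsum]
  exact (hasSum_sq_mul_geometric hr).mul_left _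

theorem hasSum_intervalIntegral_of_nonneg {F : ℕ → ℝ → ℝ} {f : ℝ → ℝ} {a b : ℝ}
    (hF_meas : ∀ n, AEStronglyMeasurable (F n) (volume.restrict (Ι a b)))
    (hF_nonneg : ∀ n, ∀ t ∈ uIoo a b, 0 ≤ F n t)
    (hF_sum : ∀ t ∈ uIoo a b, HasSum (fun n => F n t) (f t))
    (hf : IntervalIntegrable f volume a b) :
    HasSum (fun n => ∫ t in a..b, F n t) (∫ t in a..b, f t) := by
  have hae : ∀ᵐ t, t ∈ Ι a b → t ∈ uIoo a b := by
    refine (ae_restrict_iff' measurableSet_uIoc).1 ?_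
    rw [uIoc, ← restrict_Ioo_eq_restrict_Ioc]
    exact ae_restrict_mem measurableSet_Ioo
  -- dominated convergence, with the series of nonnegative terms dominating itself
  refine intervalIntegral.hasSum_integral_of_dominated_convergence F hF_meas ?_ ?_ ?_ ?_
  · exact fun n => hae.mono fun t ht ht' => (Real.norm_of_nonneg (hF_nonneg n t (ht ht'))).le
  · exact hae.mono fun t ht ht' => (hF_sum t (ht ht')).summable
  · exact hf.congr_uIoo fun t ht => (hF_sum t ht).tsum_eq.symm
  · exact hae.mono fun t ht ht' => hF_sum t (ht ht')

theorem integral_quadratic (A B C : ℝ) :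
    ∫ x in (0:ℝ)..1, (A * x ^ 2 + B * x + C) = A / 3 + B / 2 + C := by
  have hint : ∀ f : ℝ → ℝ, Continuous f → IntervalIntegrable f volume 0 1 :=
    fun f hf => hf.intervalIntegrable 0 1
  rw [intervalIntegral.integral_add (hint _ (by fun_prop)) (hint _ (by fun_prop)),
    intervalIntegral.integral_add (hint _ (by fun_prop)) (hint _ (by fun_prop)),
    intervalIntegral.integral_const_mul, intervalIntegral.integral_const_mul B (fun x => x)]
  simp only [integral_pow, integral_id, intervalIntegral.integral_const, smul_eq_mul]
  ring

noncomputable def stitKernel (n : ℕ) (a b : ℝ) : ℝ :=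
  (1 - a) ^ 3 * (3 - (1 - a) * (3 - b)) ^ n / (3 - (1 - a) * (2 - b)) ^ (n + 1)

def stitSecondMomentDensity (a b : ℝ) : ℝ :=
  a ^ 2 * (2 * b ^ 2 - 11 * b + 15) - a * (4 * b ^ 2 - 10 * b - 3) + b * (1 + 2 * b)

section stitKernel

variable {a b : ℝ}

theorem stitKernel_nonneg (n : ℕ) (ha : a ∈ Icc (0 : ℝ) 1) (hb : b ∈ Icc (0 : ℝ) 1) :
    0 ≤ stitKernel n a b := by
  obtain ⟨ha0, ha1⟩ := ha
  obtain ⟨hb0, hb1⟩ := hb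
  have hx : 0 ≤ 3 - (1 - a) * (3 - b) := by nlinarith
  have hy : 0 < 3 - (1 - a) * (2 - b) := by nlinarith
  unfold stitKernel
  positivity

theorem hasSum_sq_mul_stitKernel (ha : a ∈ Ico (0 : ℝ) 1) (hb : b ∈ Icc (0 : ℝ) 1) :
    HasSum (fun n : ℕ => (n : ℝ) ^ 2 * stitKernel n a b) (stitSecondMomentDensity a b) := by
  obtain ⟨ha0, ha1⟩ := ha
  obtain ⟨hb0, hb1⟩ := hb
  have hx : 0 ≤ 3 - (1 - a) * (3 - b) := by nlinarith
  have hxy : 3 - (1 - a) * (3 - b) < 3 - (1 - a) * (2 - b) := by nlinarith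
  have hgeom := hasSum_sq_mul_pow_div_pow (x := 3 - (1 - a) * (3 - b)) (y := 3 - (1 - a) * (2 - b))
    (by rwa [Real.norm_of_nonneg hx, Real.norm_of_nonneg (hx.trans hxy.le)])
  have hdensity : stitSecondMomentDensity a b =
      (3 - (1 - a) * (3 - b)) * ((3 - (1 - a) * (3 - b)) + (3 - (1 - a) * (2 - b))) := by
    unfold stitSecondMomentDensity
    ring
  rw [hdensity]
  exact hgeom.congr_fun fun n => by unfold stitKernel; ring

theorem integral_stitSecondMomentDensity_right (a : ℝ) :
    ∫ b in (0:ℝ)..1, stitSecondMomentDensity a b = 61 / 6 * a ^ 2 + 20 / 3 * a + 7 / 6 := by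
  have h : ∀ b, stitSecondMomentDensity a b =
      (2 * a ^ 2 - 4 * a + 2) * b ^ 2 + (-11 * a ^ 2 + 10 * a + 1) * b + (15 * a ^ 2 + 3 * a) :=
    fun b => by unfold stitSecondMomentDensity; ring
  simp only [h]
  rw [integral_quadratic]
  ring

theorem integral_integral_stitSecondMomentDensity :
    ∫ a in (0:ℝ)..1, ∫ b in (0:ℝ)..1, stitSecondMomentDensity a b = 71 / 9 := by
  simp only [integral_stitSecondMomentDensity_right, integral_quadratic]
  norm_num

theorem hasSum_intervalIntegral_sq_mul_stitKernel (ha : a ∈ Ioo (0 : ℝ) 1) :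
    HasSum (fun n : ℕ => ∫ b in (0:ℝ)..1, (n : ℝ) ^ 2 * stitKernel n a b)
      (∫ b in (0:ℝ)..1, stitSecondMomentDensity a b) := by
  refine hasSum_intervalIntegral_of_nonneg (fun n => ?_) (fun n b hb => ?_) (fun b hb => ?_)
    (Continuous.intervalIntegrable (by unfold stitSecondMomentDensity; fun_prop) _ _)
  · exact (by unfold stitKernel; fun_prop : Measurable _).aestronglyMeasurable
  · rw [uIoo_of_le zero_le_one] at hb
    exact mul_nonneg (sq_nonneg _)
      (stitKernel_nonneg n (Ioo_subset_Icc_self ha) (Ioo_subset_Icc_self hb))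
  · rw [uIoo_of_le zero_le_one] at hb
    exact hasSum_sq_mul_stitKernel (Ioo_subset_Ico_self ha) (Ioo_subset_Icc_self hb)

end stitKernel

theorem hasSum_sq_mul_stitP : HasSum (fun n : ℕ => (n : ℝ) ^ 2 * stitP n) (71 / 3) := by
  have houter : HasSum
      (fun n : ℕ => ∫ a in (0:ℝ)..1, ∫ b in (0:ℝ)..1, (n : ℝ) ^ 2 * stitKernel n a b) (71 / 9) := by
    rw [← integral_integral_stitSecondMomentDensity]
    refine hasSum_intervalIntegral_of_nonneg (fun n => ?_) (fun n a ha => ?_) (fun a ha => ?_) ?_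
    · simp_rw [intervalIntegral.integral_of_le zero_le_one]
      refine (StronglyMeasurable.integral_prod_right ?_).aestronglyMeasurable
      exact (by unfold stitKernel; fun_prop : Measurable _).stronglyMeasurable
    · rw [uIoo_of_le zero_le_one] at ha
      exact intervalIntegral.integral_nonneg zero_le_one fun b hb =>
        mul_nonneg (sq_nonneg _) (stitKernel_nonneg n (Ioo_subset_Icc_self ha) hb)
    · rw [uIoo_of_le zero_le_one] at ha
      exact hasSum_intervalIntegral_sq_mul_stitKernel ha
    · simp only [integral_stitSecondMomentDensity_right]
      exact Continuous.intervalIntegrable (by fun_prop) _ _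
  rw [show (71 / 3 : ℝ) = 3 * (71 / 9) by norm_num]
  refine (houter.mul_left 3).congr_fun fun n => ?_
  simp only [stitP, stitKernel, intervalIntegral.integral_const_mul]
  ring

theorem stit_second_moment_and_variance :
    (∑' n : ℕ, (n : ℝ) ^ 2 * stitP n = 71 / 3) ∧
    (∑' n : ℕ, (n : ℝ) ^ 2 * stitP n) - 2 ^ 2 = 59 / 3 ∧
    3 * (∫ a in (0:ℝ)..1, ∫ b in (0:ℝ)..1,
        a ^ 2 * (2 * b ^ 2 - 11 * b + 15) - a * (4 * b ^ 2 - 10 * b - 3) + b * (1 + 2 * b)) =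
      71 / 3 := by
  have hmoment := hasSum_sq_mul_stitP.tsum_eq
  refine ⟨hmoment, by rw [hmoment]; norm_num, ?_⟩
  have hdensity := integral_integral_stitSecondMomentDensity
  unfold stitSecondMomentDensity at hdensity
  rw [hdensity]
  norm_num
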